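/- arXiv:1702.03718 — 5 statements merged into one kernel-verified Lean document; each statement's English description precedes it below -/
import Mathlib

section
/- For all n ≥ 1 and k ≥ 0, c_n^{(k)} = (-1)^k · (n/k!) · ∫_0^1 x^{n-1} (ln(1-x))^k dx. -/
/-!
Substituting `x ↦ 1 - x` and expanding `(1 - x)^(n-1)` binomially reduces the integral to the
moments `∫₀¹ x^s (log x)^k dx`. Under `x = e^{-t}` these become Gamma integrals,
`(-1)^k k! / (s + 1)^(k + 1)`, and the absorption identity `n C(n-1, i) = (i + 1) C(n, i + 1)`
turns the resulting alternating sum into `c_n^{(k)}`.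
-/

/-- Roman harmonic number `c_n^{(k)}` as a real number. -/
noncomputable def romanHarmonic (n k : ℕ) : ℝ :=
  ∑ j ∈ Finset.Icc 1 n, (-1 : ℝ) ^ (j - 1) * (n.choose j) / (j : ℝ) ^ k

open Real Set MeasureTheory

theorem image_exp_neg_Ioi_zero : (fun t : ℝ => exp (-t)) '' Ioi 0 = Ioo 0 1 := by
  rw [show (fun t : ℝ => exp (-t)) = exp ∘ Neg.neg from rfl, image_comp, image_neg_Ioi, neg_zero,
    image_exp_Iio, exp_zero]

theorem hasDerivWithinAt_exp_neg (s : Set ℝ) (t : ℝ) :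
    HasDerivWithinAt (fun t => exp (-t)) (-exp (-t)) s t := by
  simpa using ((hasDerivAt_neg t).exp).hasDerivWithinAt

section
variable {E : Type*} [NormedAddCommGroup E] [NormedSpace ℝ E]

theorem integral_Ioo_zero_one_eq_integral_comp_exp_neg (g : ℝ → E) :
    ∫ x in Ioo 0 1, g x = ∫ t in Ioi 0, exp (-t) • g (exp (-t)) := by
  rw [← image_exp_neg_Ioi_zero, integral_image_eq_integral_abs_deriv_smul measurableSet_Ioi
    (fun t _ => hasDerivWithinAt_exp_neg _ t) (exp_injective.comp neg_injective).injOn]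
  simp [abs_of_pos (exp_pos _)]

theorem integrableOn_Ioo_zero_one_iff_comp_exp_neg (g : ℝ → E) :
    IntegrableOn g (Ioo 0 1) ↔ IntegrableOn (fun t => exp (-t) • g (exp (-t))) (Ioi 0) := by
  rw [← image_exp_neg_Ioi_zero,
    integrableOn_image_iff_integrableOn_abs_deriv_smul measurableSet_Ioi
      (fun t _ => hasDerivWithinAt_exp_neg _ t) (exp_injective.comp neg_injective).injOn]
  simp [abs_of_pos (exp_pos _)]

end

-- The right-hand side has the shape of `integral_rpow_mul_exp_neg_mul_rpow` with `p = 1`.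
theorem exp_neg_smul_rpow_mul_log_pow (s t : ℝ) (k : ℕ) :
    exp (-t) • (exp (-t) ^ s * log (exp (-t)) ^ k) =
      (-1) ^ k * (t ^ (k : ℝ) * exp (-(s + 1) * t ^ (1 : ℝ))) := by
  rw [smul_eq_mul, ← exp_mul, log_exp, rpow_natCast, rpow_one, neg_pow']
  rw [show -(s + 1) * t = -t + -t * s by ring, exp_add]
  ring

theorem integrableOn_rpow_mul_log_pow {s : ℝ} (hs : -1 < s) (k : ℕ) :
    IntegrableOn (fun x => x ^ s * log x ^ k) (Ioo 0 1) := by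
  rw [integrableOn_Ioo_zero_one_iff_comp_exp_neg]
  simp_rw [exp_neg_smul_rpow_mul_log_pow]
  exact (integrableOn_rpow_mul_exp_neg_mul_rpow (neg_one_lt_zero.trans_le k.cast_nonneg) one_pos
    (by linarith)).const_mul _

theorem integral_rpow_mul_log_pow {s : ℝ} (hs : -1 < s) (k : ℕ) :
    ∫ x in Ioo 0 1, x ^ s * log x ^ k = (-1) ^ k * k.factorial / (s + 1) ^ (k + 1) := by
  rw [integral_Ioo_zero_one_eq_integral_comp_exp_neg]
  simp_rw [exp_neg_smul_rpow_mul_log_pow]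
  rw [integral_const_mul, integral_rpow_mul_exp_neg_mul_rpow one_pos
    (neg_one_lt_zero.trans_le k.cast_nonneg) (by linarith)]
  simp only [div_one, mul_one]
  rw [Gamma_nat_eq_factorial, ← Nat.cast_succ, rpow_neg (by linarith), rpow_natCast]
  field_simp

open Finset in
theorem integral_one_sub_pow_mul_log_pow (m k : ℕ) :
    ∫ x in Ioo 0 1, (1 - x) ^ m * log x ^ k =
      (-1) ^ k * k.factorial *
        ∑ i ∈ range (m + 1), (-1) ^ i * m.choose i / ((i : ℝ) + 1) ^ (k + 1) := by
  have hexpand : ∀ x : ℝ, (1 - x) ^ m * log x ^ k =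
      ∑ i ∈ range (m + 1), (-1) ^ i * m.choose i * (x ^ (i : ℝ) * log x ^ k) := by
    intro x
    rw [sub_eq_neg_add, add_pow, sum_mul]
    refine sum_congr rfl fun i _ => ?_
    rw [rpow_natCast, neg_pow, one_pow]
    ring
  simp_rw [hexpand]
  rw [integral_finsetSum _ fun i _ =>
      (integrableOn_rpow_mul_log_pow (neg_one_lt_zero.trans_le i.cast_nonneg) k).const_mul _,
    mul_sum]
  refine sum_congr rfl fun i _ => ?_
  rw [integral_const_mul, integral_rpow_mul_log_pow (neg_one_lt_zero.trans_le i.cast_nonneg)]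
  ring

open Finset in
theorem romanHarmonic_succ (m k : ℕ) :
    romanHarmonic (m + 1) k =
      (m + 1) * ∑ i ∈ range (m + 1), (-1) ^ i * m.choose i / ((i : ℝ) + 1) ^ (k + 1) := by
  rw [romanHarmonic, ← Finset.Ico_add_one_right_eq_Icc, sum_Ico_eq_sum_range, add_tsub_cancel_right,
    mul_sum]
  refine sum_congr rfl fun i _ => ?_
  have habsorb : ((m : ℝ) + 1) * m.choose i = (m + 1).choose (i + 1) * ((i : ℝ) + 1) := by
    exact_mod_cast Nat.add_one_mul_choose_eq m i
  rw [add_tsub_cancel_left, add_comm 1 i]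
  push_cast
  field_simp
  linear_combination (-((i : ℝ) + 1) ^ k) * habsorb

theorem roman_harmonic_integral_repr_general (n k : ℕ) :
    romanHarmonic n k =
      (-1 : ℝ) ^ k * ((n : ℝ) / (Nat.factorial k : ℝ)) *
        ∫ x in (0:ℝ)..1, x ^ (n - 1) * (Real.log (1 - x)) ^ k := by
  rcases n with _ | m
  · simp [romanHarmonic]
  have hreflect : ∫ x in (0 : ℝ)..1, x ^ (m + 1 - 1) * log (1 - x) ^ k =
      ∫ x in Ioo 0 1, (1 - x) ^ m * log x ^ k := by
    rw [add_tsub_cancel_right, ← integral_Ioc_eq_integral_Ioo,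
      ← intervalIntegral.integral_of_le zero_le_one]
    simpa using intervalIntegral.integral_comp_sub_left (fun x => (1 - x) ^ m * log x ^ k) (1 : ℝ)
      (a := 0) (b := 1)
  rw [hreflect, integral_one_sub_pow_mul_log_pow, romanHarmonic_succ, ← mul_assoc,
    mul_mul_mul_comm, ← mul_pow, neg_mul_neg, one_mul, one_pow, one_mul,
    div_mul_cancel₀ _ (Nat.cast_ne_zero.2 k.factorial_ne_zero), Nat.cast_succ]

theorem roman_harmonic_integral_repr (n k : ℕ) (hn : 1 ≤ n) :
    romanHarmonic n k =
      (-1 : ℝ) ^ k * ((n : ℝ) / (Nat.factorial k : ℝ)) *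
        ∫ x in (0:ℝ)..1, x ^ (n - 1) * (Real.log (1 - x)) ^ k :=
  roman_harmonic_integral_repr_general n k
end

section
/- For each fixed n ≥ 1 and for |z| < 1, the power series Σ_{k=0}^{∞} c_n^{(k)} z^k converges to n!/(1-z)_n, where (x)_n = x(x+1)···(x+n-1) is the Pochhammer symbol. -/
/-!
Summing the geometric series in `k` term by term gives
`∑_{j=1}^n (-1)^(j-1) C(n,j) (1 - z/j)⁻¹`. The absorption identity `j C(n,j) = n C(n-1,j-1)`
turns this into `n ∑_{i<n} (-1)^i C(n-1,i) / (x+i)` at `x = 1 - z`, and up to the sign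
`(-1)^(n-1)` this alternating sum is the `(n-1)`-st forward difference of `y ↦ y⁻¹` at `x`,
which equals `(-1)^(n-1) (n-1)! / (x)_n`; it never meets a pole because `Re (1 - z) > 0`.
-/

open Finset fwdDiff Nat

theorem fwdDiff_iter_inv {K : Type*} [Field K] (m : ℕ) {x : K} (hx : ∀ i ≤ m, x + i ≠ 0) :
    (Δ_[1])^[m] (fun y : K => y⁻¹) x = (-1) ^ m * m ! / ∏ i ∈ range (m + 1), (x + i) := by
  induction m generalizing x with
  | zero => simp
  | succ m ih =>
    have hx₁ : ∀ i ≤ m, x + 1 + i ≠ 0 := fun i hi => by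
      simpa [add_assoc, add_comm (1 : K)] using hx (i + 1) (by omega)
    have hx₀ : x ≠ 0 := by simpa using hx 0 (by omega)
    have hxm : x + (m + 1) ≠ 0 := by exact_mod_cast hx (m + 1) le_rfl
    have hP : ∏ i ∈ range (m + 1), (x + i) ≠ 0 :=
      prod_ne_zero_iff.mpr fun i hi => hx i (by simp at hi; omega)
    have hQ : ∏ i ∈ range (m + 1), (x + 1 + i) ≠ 0 :=
      prod_ne_zero_iff.mpr fun i hi => hx₁ i (by simp at hi; omega)
    have hshift : (∏ i ∈ range (m + 1), (x + i)) * (x + (m + 1)) =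
        x * ∏ i ∈ range (m + 1), (x + 1 + i) := by
      calc _ = ∏ i ∈ range (m + 1 + 1), (x + i) := by
            rw [prod_range_succ _ (m + 1)]; push_cast; rfl
        _ = _ := by rw [prod_range_succ', mul_comm]; simp [add_assoc, add_comm (1 : K)]
    rw [Function.iterate_succ_apply', fwdDiff, ih hx₁, ih fun i hi => hx i (by omega),
      prod_range_succ _ (m + 1), factorial_succ]
    push_cast
    field_simp
    linear_combination (-1) ^ m * (m ! : K) * hshift

theorem sum_range_alternating_choose_div {K : Type*} [Field K] (m : ℕ) {x : K}
    (hx : ∀ i ≤ m, x + i ≠ 0) :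
    ∑ j ∈ range (m + 1), (-1) ^ j * m.choose j / (x + j) =
      m ! / ∏ i ∈ range (m + 1), (x + i) := by
  calc _ = (-1) ^ m * ∑ j ∈ range (m + 1),
        ((-1 : ℤ) ^ (m - j) * m.choose j) • (x + j • (1 : K))⁻¹ := by
        rw [mul_sum]
        refine sum_congr rfl fun j hj => ?_
        obtain ⟨d, rfl⟩ := exists_add_of_le (mem_range_succ_iff.mp hj)
        simp only [add_tsub_cancel_left, zsmul_eq_mul, nsmul_eq_mul, mul_one, pow_add]
        push_cast
        ring_nf
        simp
    _ = _ := by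
        rw [← fwdDiff_iter_eq_sum_shift, fwdDiff_iter_inv m hx, ← mul_div_assoc, ← mul_assoc,
          ← pow_add, ← two_mul, pow_mul]
        simp

theorem sum_Icc_alternating_choose_mul_inv_one_sub_div {K : Type*} [Field K] [CharZero K] (m : ℕ)
    {z : K} (hz : ∀ i ≤ m, 1 - z + i ≠ 0) :
    ∑ j ∈ Icc 1 (m + 1), (-1) ^ (j - 1) * (m + 1).choose j * (1 - z / j)⁻¹ =
      (m + 1)! / ∏ i ∈ range (m + 1), (1 - z + i) := by
  have habsorb : ∀ i ≤ m, (-1) ^ i * (m + 1).choose (i + 1) * (1 - z / (i + 1 : ℕ))⁻¹ =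
      (m + 1) * ((-1) ^ i * m.choose i / (1 - z + i)) := fun i hi => by
    have hchoose : ((m + 1).choose (i + 1) : K) * (i + 1) = (m + 1) * m.choose i := by
      exact_mod_cast (add_one_mul_choose_eq m i).symm
    have hi₁ : (i + 1 : K) ≠ 0 := by exact_mod_cast succ_ne_zero i
    have hzi := hz i hi
    have hinv : (1 - z / (i + 1 : K))⁻¹ = (i + 1) / (1 - z + i) := by
      rw [inv_eq_iff_eq_inv, inv_div]
      field_simp
      ring
    push_cast
    rw [hinv]
    field_simp
    linear_combination hchoose
  rw [← Ico_add_one_right_eq_Icc, sum_Ico_eq_sum_range, add_tsub_cancel_right]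
  calc _ = ∑ i ∈ range (m + 1), (m + 1) * ((-1) ^ i * m.choose i / (1 - z + i)) :=
        sum_congr rfl fun i hi => by
          rw [add_comm 1 i, add_tsub_cancel_right, habsorb i (mem_range_succ_iff.mp hi)]
    _ = _ := by
        rw [← mul_sum, sum_range_alternating_choose_div m hz, factorial_succ]
        push_cast
        ring

theorem hasSum_romanHarmonic_mul_pow (n : ℕ) {z : ℂ} (hz : ‖z‖ < 1) :
    HasSum (fun k : ℕ => (romanHarmonic n k : ℂ) * z ^ k)
      (∑ j ∈ Icc 1 n, (-1) ^ (j - 1) * n.choose j * (1 - z / j)⁻¹) := by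
  have hgeom : ∀ j ∈ Icc 1 n,
      HasSum (fun k : ℕ => (-1 : ℂ) ^ (j - 1) * n.choose j * (z / j) ^ k)
        ((-1) ^ (j - 1) * n.choose j * (1 - z / j)⁻¹) := fun j hj => by
    have hj : (1 : ℝ) ≤ j := by exact_mod_cast (mem_Icc.mp hj).1
    have hzj : ‖z / j‖ < 1 := by
      rw [norm_div, Complex.norm_natCast]
      exact (div_le_self (norm_nonneg z) hj).trans_lt hz
    exact (hasSum_geometric_of_norm_lt_one hzj).mul_left _
  have hterm : (fun k : ℕ => (romanHarmonic n k : ℂ) * z ^ k) =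
      fun k => ∑ j ∈ Icc 1 n, (-1 : ℂ) ^ (j - 1) * n.choose j * (z / j) ^ k := by
    funext k
    simp only [romanHarmonic, Complex.ofReal_sum, sum_mul, div_pow]
    push_cast
    exact sum_congr rfl fun j _ => by ring
  exact hterm ▸ hasSum_sum hgeom

theorem one_sub_add_natCast_ne_zero {z : ℂ} (hz : z.re < 1) (i : ℕ) : 1 - z + i ≠ 0 := by
  intro h
  have hre := congrArg Complex.re h
  simp only [Complex.add_re, Complex.sub_re, Complex.one_re, Complex.natCast_re,
    Complex.zero_re] at hre
  linarith [i.cast_nonneg (α := ℝ)]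

theorem roman_harmonic_ogf (n : ℕ) (hn : 1 ≤ n) (z : ℂ) (hz : ‖z‖ < 1) :
    HasSum (fun k : ℕ => (romanHarmonic n k : ℂ) * z ^ k)
      ((Nat.factorial n : ℂ) / ∏ i ∈ Finset.range n, (1 - z + (i : ℂ))) := by
  obtain ⟨m, rfl⟩ : ∃ m, n = m + 1 := ⟨n - 1, by omega⟩
  rw [← sum_Icc_alternating_choose_mul_inv_one_sub_div m fun i _ =>
    one_sub_add_natCast_ne_zero ((Complex.re_le_norm z).trans_lt hz) i]
  exact hasSum_romanHarmonic_mul_pow (m + 1) hz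
end

section
/- For each fixed n ≥ 1, Σ_{k=0}^{∞} (-1)^k c_n^{(k)} / 2^k = 2^{2n} (n!)^2 / (2n+1)!. -/
lemma key (n : ℕ) : ∀ x : ℝ, (∀ i ∈ Finset.range (n+1), x + i ≠ 0) →
    ∑ j ∈ Finset.range (n+1), (-1:ℝ)^j * (n.choose j) / (x + j)
      = (n.factorial : ℝ) / ∏ i ∈ Finset.range (n+1), (x + i) := by
  induction n with
  | zero => intro x hx; simp
  | succ n ih =>
    intro x hx
    have hx0 : x ≠ 0 := by simpa using hx 0 (by simp)
    have hx' : ∀ i ∈ Finset.range (n+1), x + i ≠ 0 := fun i hi =>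
      hx i (Finset.mem_range.2 (by have := Finset.mem_range.1 hi; omega))
    have hx1 : ∀ i ∈ Finset.range (n+1), (x+1) + i ≠ 0 := by
      intro i hi
      have h := hx (i+1) (Finset.mem_range.2 (by have := Finset.mem_range.1 hi; omega))
      push_cast at h ⊢
      intro hc; exact h (by linarith)
    set f : ℕ → ℝ := fun j => (-1:ℝ)^j * ((n+1).choose j) / (x + j) with hf
    set g : ℕ → ℝ := fun j => (-1:ℝ)^j * (n.choose j) / (x + j) with hg
    set h : ℕ → ℝ := fun j => (-1:ℝ)^j * (n.choose j) / ((x+1) + j) with hh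
    have step1 : ∑ j ∈ Finset.range (n+2), f j
        = (∑ j ∈ Finset.range (n+1), g j) - ∑ j ∈ Finset.range (n+1), h j := by
      calc ∑ j ∈ Finset.range (n+2), f j
          = (∑ j ∈ Finset.range (n+1), f (j+1)) + f 0 := Finset.sum_range_succ' f (n+1)
        _ = (∑ j ∈ Finset.range (n+1), (g (j+1) - h j)) + f 0 := by
            congr 1
            refine Finset.sum_congr rfl fun j hj => ?_
            simp only [hf, hg, hh, Nat.choose_succ_succ]
            push_cast
            have hne : (x+1) + (j:ℝ) ≠ 0 := hx1 j hj
            have hxx : x + ((j:ℝ)+1) ≠ 0 := by intro hc; exact hne (by linarith)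
            field_simp
            ring
        _ = ((∑ j ∈ Finset.range (n+1), g (j+1)) - ∑ j ∈ Finset.range (n+1), h j) + f 0 := by
            rw [Finset.sum_sub_distrib]
        _ = ((∑ j ∈ Finset.range n, g (j+1)) - ∑ j ∈ Finset.range (n+1), h j) + f 0 := by
            rw [Finset.sum_range_succ (fun j => g (j+1))]
            simp [hg, Nat.choose_succ_self]
        _ = (∑ j ∈ Finset.range (n+1), g j) - ∑ j ∈ Finset.range (n+1), h j := by
            have : f 0 = g 0 := by simp [hf, hg]
            rw [this, Finset.sum_range_succ' g n]
            ring
    rw [show n+1+1 = n+2 from rfl, step1, ih x hx', ih (x+1) hx1]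
    have hP : (∏ i ∈ Finset.range (n+1), (x + i)) ≠ 0 :=
      Finset.prod_ne_zero_iff.2 hx'
    have hP1 : (∏ i ∈ Finset.range (n+1), ((x+1) + i)) ≠ 0 :=
      Finset.prod_ne_zero_iff.2 hx1
    have hxn : x + ((n:ℝ)+1) ≠ 0 := by
      have := hx (n+1) (Finset.mem_range.2 (by omega)); push_cast at this; exact this
    have hrel : ∏ i ∈ Finset.range (n+2), (x + (i:ℝ))
        = (∏ i ∈ Finset.range (n+1), (x + i)) * (x + ((n:ℝ)+1)) := by
      rw [Finset.prod_range_succ]; push_cast; ring_nf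
    have hrel2 : ∏ i ∈ Finset.range (n+2), (x + (i:ℝ))
        = (∏ i ∈ Finset.range (n+1), ((x+1) + i)) * x := by
      rw [Finset.prod_range_succ' (fun i => x + (i:ℝ)) (n+1)]
      push_cast
      congr 1
      · exact Finset.prod_congr rfl (fun i _ => by ring)
      · ring
    have hkey : (∏ i ∈ Finset.range (n+1), ((x+1) + i)) * x
        = (∏ i ∈ Finset.range (n+1), (x + i)) * (x + ((n:ℝ)+1)) := hrel2.symm.trans hrel
    rw [show n+1+1 = n+2 from rfl, hrel, Nat.factorial_succ]
    push_cast
    rw [div_sub_div _ _ hP hP1, div_eq_div_iff (mul_ne_zero hP hP1) (mul_ne_zero hP hxn)]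
    linear_combination ((n.factorial : ℝ) * ∏ i ∈ Finset.range (n+1), (x + i)) * hkey

lemma prod_half (n : ℕ) : ∏ i ∈ Finset.range (n+1), ((1:ℝ)/2 + i)
    = ((2*n+1).factorial : ℝ) / (2^(2*n+1) * n.factorial) := by
  induction n with
  | zero => norm_num
  | succ n ih =>
    rw [Finset.prod_range_succ, ih]
    have e1 : (2*(n+1)+1).factorial = (2*n+3) * ((2*n+2) * (2*n+1).factorial) := by
      have h1 : 2*(n+1)+1 = (2*n+2)+1 := by ring
      rw [h1, Nat.factorial_succ, show 2*n+2 = (2*n+1)+1 from rfl, Nat.factorial_succ]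
    have e2 : (n+1).factorial = (n+1) * n.factorial := Nat.factorial_succ n
    rw [e1, e2]
    have h2 : ((2*n+1).factorial : ℝ) ≠ 0 := Nat.cast_ne_zero.2 (Nat.factorial_ne_zero _)
    have h3 : ((n).factorial : ℝ) ≠ 0 := Nat.cast_ne_zero.2 (Nat.factorial_ne_zero _)
    push_cast
    field_simp
    ring

lemma Fval (n : ℕ) : ∑ j ∈ Finset.range (n+1), (-1:ℝ)^j * (n.choose j) / (2*(j:ℝ)+1)
    = 2^(2*n) * (n.factorial:ℝ)^2 / ((2*n+1).factorial : ℝ) := by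
  have hx : ∀ i ∈ Finset.range (n+1), (1:ℝ)/2 + (i:ℝ) ≠ 0 := fun i _ => by positivity
  have h1 := key n (1/2) hx
  have h2 : ∑ j ∈ Finset.range (n+1), (-1:ℝ)^j * (n.choose j) / (2*(j:ℝ)+1)
      = (1/2) * ∑ j ∈ Finset.range (n+1), (-1:ℝ)^j * (n.choose j) / ((1:ℝ)/2 + j) := by
    rw [Finset.mul_sum]
    refine Finset.sum_congr rfl fun j _ => ?_
    have h5 : (1:ℝ)/2 + (j:ℝ) = (2*(j:ℝ)+1)/2 := by ring
    rw [h5, div_div_eq_mul_div]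
    ring
  rw [h2, h1, prod_half n]
  have hfac : (((2*n+1).factorial : ℕ) : ℝ) ≠ 0 := Nat.cast_ne_zero.2 (Nat.factorial_ne_zero _)
  have hfn : ((n.factorial : ℕ) : ℝ) ≠ 0 := Nat.cast_ne_zero.2 (Nat.factorial_ne_zero _)
  rw [div_div_eq_mul_div]
  field_simp
  ring

lemma sum_Icc_one {M : Type*} [AddCommMonoid M] (n : ℕ) (f : ℕ → M) :
    ∑ j ∈ Finset.Icc 1 n, f j = ∑ i ∈ Finset.range n, f (i+1) := by
  induction n with
  | zero => simp
  | succ n ih => rw [Finset.sum_range_succ, ← ih, ← Finset.sum_Icc_succ_top (by omega)]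

lemma alt_sum (n : ℕ) (hn : 1 ≤ n) :
    ∑ i ∈ Finset.range n, (-1:ℝ)^i * (n.choose (i+1)) = 1 := by
  have h : (∑ m ∈ Finset.range (n + 1), ((-1:ℤ) ^ m * n.choose m)) = 0 :=
    Int.alternating_sum_range_choose_of_ne (by omega)
  have h2 : (∑ m ∈ Finset.range (n + 1), ((-1:ℝ) ^ m * n.choose m)) = 0 := by
    exact_mod_cast congrArg (Int.cast : ℤ → ℝ) h
  rw [Finset.sum_range_succ' (fun m => (-1:ℝ)^m * (n.choose m)) n] at h2
  simp only [pow_zero, one_mul, Nat.choose_zero_right, Nat.cast_one] at h2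
  calc ∑ i ∈ Finset.range n, (-1:ℝ)^i * (n.choose (i+1))
      = -∑ i ∈ Finset.range n, (-1:ℝ)^(i+1) * (n.choose (i+1)) := by
        rw [← Finset.sum_neg_distrib]
        exact Finset.sum_congr rfl fun i _ => by ring
    _ = 1 := by linarith

theorem roman_harmonic_alt_sum_half (n : ℕ) (hn : 1 ≤ n) :
    HasSum (fun k : ℕ => (-1 : ℝ) ^ k * romanHarmonic n k / 2 ^ k)
      (2 ^ (2 * n) * (Nat.factorial n : ℝ) ^ 2 / (Nat.factorial (2 * n + 1) : ℝ)) := by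
  -- per-j geometric series
  have h_each : ∀ j ∈ Finset.Icc 1 n,
      HasSum (fun k : ℕ => (-1:ℝ)^k * ((-1:ℝ)^(j-1) * (n.choose j) / (j:ℝ)^k) / 2^k)
        (((-1:ℝ)^(j-1) * (n.choose j)) * (1 - (-(2*(j:ℝ))⁻¹))⁻¹) := by
    intro j hj
    have hj1 : (1:ℝ) ≤ (j:ℝ) := by exact_mod_cast (Finset.mem_Icc.1 hj).1
    have hnorm : ‖-((2*(j:ℝ))⁻¹)‖ < 1 := by
      rw [norm_neg, norm_inv, Real.norm_eq_abs, abs_of_pos (by linarith)]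
      rw [inv_lt_one_iff₀]
      right; linarith
    have geom := hasSum_geometric_of_norm_lt_one hnorm
    have hmul := geom.mul_left ((-1:ℝ)^(j-1) * (n.choose j))
    have heq : (fun k : ℕ => ((-1:ℝ)^(j-1) * (n.choose j)) * (-(2*(j:ℝ))⁻¹)^k)
        = fun k : ℕ => (-1:ℝ)^k * ((-1:ℝ)^(j-1) * (n.choose j) / (j:ℝ)^k) / 2^k := by
      funext k
      have : (-((2*(j:ℝ))⁻¹))^k = (-1:ℝ)^k * ((2:ℝ)^k * (j:ℝ)^k)⁻¹ := by
        rw [neg_pow, inv_pow, mul_pow]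
      rw [this]
      ring
    rw [heq] at hmul
    exact hmul
  have htotal := hasSum_sum h_each
  have hfun : (fun k : ℕ => (-1 : ℝ) ^ k * romanHarmonic n k / 2 ^ k)
      = fun k : ℕ => ∑ j ∈ Finset.Icc 1 n,
          (-1:ℝ)^k * ((-1:ℝ)^(j-1) * (n.choose j) / (j:ℝ)^k) / 2^k := by
    funext k
    rw [romanHarmonic, Finset.mul_sum, Finset.sum_div]
  rw [hfun]
  -- now identify the value
  have hval : ∑ j ∈ Finset.Icc 1 n,
      ((-1:ℝ)^(j-1) * (n.choose j)) * (1 - (-(2*(j:ℝ))⁻¹))⁻¹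
      = 2 ^ (2 * n) * (Nat.factorial n : ℝ) ^ 2 / (Nat.factorial (2 * n + 1) : ℝ) := by
    rw [sum_Icc_one n (fun j => ((-1:ℝ)^(j-1) * (n.choose j)) * (1 - (-(2*(j:ℝ))⁻¹))⁻¹)]
    have hterm : ∀ i ∈ Finset.range n,
        ((-1:ℝ)^(i+1-1) * (n.choose (i+1))) * (1 - (-(2*((i+1:ℕ):ℝ))⁻¹))⁻¹
        = (-1:ℝ)^i * (n.choose (i+1)) - (-1:ℝ)^i * (n.choose (i+1)) / (2*((i:ℝ)+1)+1) := by
      intro i hi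
      have hpos : (0:ℝ) < 2*((i:ℝ)+1) := by positivity
      have hd : (2*((i:ℝ)+1)+1) ≠ 0 := by positivity
      push_cast
      rw [sub_neg_eq_add]
      have h2 : (1 + (2*((i:ℝ)+1))⁻¹) = (2*((i:ℝ)+1)+1)/(2*((i:ℝ)+1)) := by
        field_simp
      rw [h2, inv_div]
      field_simp
      ring
    rw [Finset.sum_congr rfl hterm, Finset.sum_sub_distrib, alt_sum n hn]
    -- remaining: 1 - T = Fval sum
    have hF := Fval n
    rw [Finset.sum_range_succ' (fun j => (-1:ℝ)^j * (n.choose j) / (2*(j:ℝ)+1)) n] at hF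
    simp only [pow_zero, one_mul, Nat.choose_zero_right, Nat.cast_one, Nat.cast_zero] at hF
    have hT : ∑ i ∈ Finset.range n, (-1:ℝ)^(i+1) * (n.choose (i+1)) / (2*((i+1:ℕ):ℝ)+1)
        = -∑ i ∈ Finset.range n, (-1:ℝ)^i * (n.choose (i+1)) / (2*((i:ℝ)+1)+1) := by
      rw [← Finset.sum_neg_distrib]
      refine Finset.sum_congr rfl fun i _ => ?_
      push_cast
      ring
    rw [hT] at hF
    linarith [hF]
  rw [← hval]
  exact htotal
end

section
/- For each fixed n ≥ 1, the Abel sum of Σ_{k=0}^{∞} (-1)^k c_n^{(k)} equals 1/(n+1): that is, lim_{z→1⁻} Σ_{k=0}^{∞} (-1)^k c_n^{(k)} z^k = 1/(n+1). -/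
/-!
Expanding `c_n^{(k)}` and summing the geometric series in `-z / j` termwise, the power series
equals the rational function `∑ⱼ (-1)^(j-1) C(n,j) j / (j + z)` for `|z| < 1`. That function is
continuous at `z = 1`, and writing `j / (j + 1) = 1 - 1 / (j + 1)` reduces its value there to the
alternating binomial sums `∑ⱼ (-1)^j C(n,j) = 0` and `∑ⱼ (-1)^j C(n,j) / (j + 1) = 1 / (n + 1)`.
-/

open Filter

open Finset Topology

section Binomial

variable {K : Type*} [Field K] [CharZero K]

theorem sum_range_neg_one_pow_mul_choose_of_ne_zero {n : ℕ} (hn : n ≠ 0) :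
    ∑ j ∈ range (n + 1), (-1 : K) ^ j * n.choose j = 0 := by
  exact_mod_cast congrArg (Int.cast : ℤ → K) (Int.alternating_sum_range_choose_of_ne hn)

theorem sum_range_neg_one_pow_mul_choose_div_succ (n : ℕ) :
    ∑ j ∈ range (n + 1), (-1 : K) ^ j * n.choose j / (j + 1) = 1 / (n + 1) := by
  have hshift : ∑ j ∈ range (n + 1), (-1 : K) ^ j * (n + 1).choose (j + 1) = 1 := by
    have h := sum_range_neg_one_pow_mul_choose_of_ne_zero (K := K) n.succ_ne_zero
    rw [sum_range_succ'] at h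
    simp only [pow_succ, mul_neg_one, neg_mul, sum_neg_distrib, pow_zero, Nat.choose_zero_right,
      Nat.cast_one, mul_one] at h
    linear_combination -h
  have habsorb : ∀ j : ℕ, (n.choose j : K) / (j + 1) = (n + 1).choose (j + 1) / (n + 1) := by
    intro j
    rw [div_eq_div_iff (Nat.cast_add_one_ne_zero j) (Nat.cast_add_one_ne_zero n)]
    rw [mul_comm]
    exact_mod_cast Nat.add_one_mul_choose_eq n j
  simp_rw [mul_div_assoc, habsorb, ← mul_div_assoc, ← sum_div, hshift]

theorem sum_Icc_neg_one_pow_pred_mul_choose_mul_div_succ {n : ℕ} (hn : n ≠ 0) :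
    ∑ j ∈ Icc 1 n, (-1 : K) ^ (j - 1) * n.choose j * (j / (j + 1)) = 1 / (n + 1) := by
  have hrange : ∑ j ∈ Icc 1 n, (-1 : K) ^ (j - 1) * n.choose j * (j / (j + 1))
      = -∑ j ∈ range (n + 1), (-1 : K) ^ j * n.choose j * (j / (j + 1)) := by
    rw [← Ico_add_one_right_eq_Icc, sum_Ico_eq_sum_range, sum_range_succ']
    simp [add_comm 1, pow_succ, ← sum_neg_distrib]
  have hsplit : ∀ j : ℕ, (-1 : K) ^ j * n.choose j * (j / (j + 1))
      = (-1 : K) ^ j * n.choose j - (-1 : K) ^ j * n.choose j / (j + 1) := by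
    intro j
    field_simp
    ring
  simp_rw [hrange, hsplit, sum_sub_distrib, sum_range_neg_one_pow_mul_choose_of_ne_zero hn,
    sum_range_neg_one_pow_mul_choose_div_succ, zero_sub, neg_neg]

end Binomial

theorem hasSum_pow_neg_div {K : Type*} [NormedField K] {x z : K} (h : ‖z‖ < ‖x‖) :
    HasSum (fun k ↦ (-z / x) ^ k) (x / (x + z)) := by
  have hx : x ≠ 0 := norm_pos_iff.1 (lt_of_le_of_lt (norm_nonneg z) h)
  have hratio : ‖-z / x‖ < 1 := by
    rwa [norm_div, norm_neg, div_lt_one (norm_pos_iff.2 hx)]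
  convert hasSum_geometric_of_norm_lt_one hratio using 1
  rw [neg_div, sub_neg_eq_add, one_add_div hx, inv_div]

theorem neg_one_pow_mul_romanHarmonic_mul_pow (n k : ℕ) (z : ℝ) :
    (-1) ^ k * romanHarmonic n k * z ^ k
      = ∑ j ∈ Icc 1 n, (-1) ^ (j - 1) * n.choose j * (-z / j) ^ k := by
  simp only [romanHarmonic, mul_sum, sum_mul, div_pow, neg_pow z]
  refine sum_congr rfl fun j _ ↦ ?_
  ring

theorem hasSum_neg_one_pow_mul_romanHarmonic_mul_pow (n : ℕ) {z : ℝ} (hz : |z| < 1) :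
    HasSum (fun k ↦ (-1) ^ k * romanHarmonic n k * z ^ k)
      (∑ j ∈ Icc 1 n, (-1) ^ (j - 1) * n.choose j * (j / (j + z))) := by
  simp_rw [neg_one_pow_mul_romanHarmonic_mul_pow]
  refine hasSum_sum fun j hj ↦ ?_
  have hzj : ‖z‖ < ‖(j : ℝ)‖ := by
    rw [Real.norm_eq_abs, Real.norm_natCast]
    exact hz.trans_le (mod_cast (mem_Icc.1 hj).1)
  exact (hasSum_pow_neg_div hzj).mul_left _

theorem roman_harmonic_abel_sum (n : ℕ) (hn : 1 ≤ n) :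
    (∀ z : ℝ, 0 ≤ z → z < 1 →
        Summable (fun k : ℕ => (-1 : ℝ) ^ k * romanHarmonic n k * z ^ k)) ∧
      Tendsto (fun z : ℝ => ∑' k : ℕ, (-1 : ℝ) ^ k * romanHarmonic n k * z ^ k)
        (nhdsWithin 1 (Set.Iio 1)) (nhds (1 / ((n : ℝ) + 1))) := by
  set F : ℝ → ℝ := fun z ↦ ∑ j ∈ Icc 1 n, (-1) ^ (j - 1) * n.choose j * (j / (j + z))
  refine ⟨fun z hz0 hz1 ↦
    (hasSum_neg_one_pow_mul_romanHarmonic_mul_pow n (abs_lt.2 ⟨by linarith, hz1⟩)).summable, ?_⟩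
  have hF : ContinuousAt F 1 := by
    fun_prop (disch := positivity)
  have hF1 : F 1 = 1 / (n + 1) := sum_Icc_neg_one_pow_pred_mul_choose_mul_div_succ (by omega)
  have hFeq : F =ᶠ[𝓝[<] 1] fun z ↦ ∑' k, (-1) ^ k * romanHarmonic n k * z ^ k := by
    filter_upwards [Ioo_mem_nhdsLT (neg_lt_self one_pos)] with z hz
    exact (hasSum_neg_one_pow_mul_romanHarmonic_mul_pow n (abs_lt.2 hz)).tsum_eq.symm
  exact hF1 ▸ (hF.tendsto.mono_left nhdsWithin_le_nhds).congr' hFeq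
end

section
/- For fixed k ≥ 1, the quantity c_n^{(k)} / (ln n)^k tends to 1/k! as n → ∞. -/
open Filter

/-!
Pascal's rule together with `(n + 1) * C(n, j - 1) = j * C(n + 1, j)` gives the recursion
`c_n^{(k+1)} = ∑_{m=1}^{n} c_m^{(k)} / m`, starting from `c_n^{(0)} = 1`.
If `c_m^{(k)} ~ (log m)^k / k!`, then by the mean value theorem `c_m^{(k)} / m` is asymptotic
to the telescoping increment `((log (m+1))^{k+1} - (log m)^{k+1}) / (k+1)!`, and summing
equivalent nonnegative terms of a divergent series preserves the equivalence.
-/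

open Asymptotics Finset Real
open scoped Nat

namespace Asymptotics

theorem IsEquivalent.of_le_of_le {α : Type*} {l : Filter α} {f u v w : α → ℝ}
    (hu : u ~[l] f) (hw : w ~[l] f) (huv : ∀ᶠ x in l, u x ≤ v x)
    (hvw : ∀ᶠ x in l, v x ≤ w x) : v ~[l] f := by
  have hbound : (v - f) =O[l] fun x => ‖(u - f) x‖ + ‖(w - f) x‖ := by
    refine IsBigO.of_norm_eventuallyLE ?_
    filter_upwards [huv, hvw] with x h₁ h₂
    simp only [Pi.sub_apply, Real.norm_eq_abs]
    exact abs_le.2 ⟨by linarith [neg_abs_le (u x - f x), abs_nonneg (w x - f x)],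
      by linarith [le_abs_self (w x - f x), abs_nonneg (u x - f x)]⟩
  exact hbound.trans_isLittleO (hu.isLittleO.norm_left.add hw.isLittleO.norm_left)

theorem IsEquivalent.sum_range {u v : ℕ → ℝ} (h : u ~[atTop] v) (hv : 0 ≤ v)
    (hsum : Tendsto (fun n => ∑ i ∈ range n, v i) atTop atTop) :
    (fun n => ∑ i ∈ range n, u i) ~[atTop] fun n => ∑ i ∈ range n, v i := by
  refine (h.isLittleO.sum_range hv hsum).congr_left fun n => ?_
  simp only [Pi.sub_apply, sum_sub_distrib]

end Asymptotics

theorem isEquivalent_log_add_one : (fun x : ℝ => log (x + 1)) ~[atTop] log := by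
  have : (fun x : ℝ => x + 1) ~[atTop] id :=
    IsEquivalent.refl.add_const_of_norm_tendsto_atTop tendsto_norm_atTop_atTop
  exact this.log tendsto_id

theorem exists_log_add_one_pow_sub_log_pow_eq (k : ℕ) {x : ℝ} (hx : 0 < x) :
    ∃ ξ ∈ Set.Ioo x (x + 1),
      log (x + 1) ^ (k + 1) - log x ^ (k + 1) = (k + 1) * log ξ ^ k / ξ := by
  obtain ⟨ξ, hξ, h⟩ := exists_hasDerivAt_eq_slope (fun y => log y ^ (k + 1))
    (fun y => (k + 1 : ℕ) * log y ^ k * y⁻¹) (lt_add_one x)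
    (ContinuousOn.pow (continuousOn_log.mono fun y hy => (hx.trans_le hy.1).ne') _)
    (fun y hy => (hasDerivAt_log (hx.trans hy.1).ne').pow (k + 1))
  refine ⟨ξ, hξ, ?_⟩
  rw [add_sub_cancel_left, div_one] at h
  rw [← h]
  push_cast
  ring

theorem log_add_one_pow_sub_log_pow_isEquivalent (k : ℕ) :
    (fun x : ℝ => log (x + 1) ^ (k + 1) - log x ^ (k + 1)) ~[atTop]
      fun x => (k + 1) * log (x + 1) ^ k / (x + 1) := by
  have hlower : (fun x : ℝ => (k + 1) * log x ^ k / (x + 1)) ~[atTop]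
      fun x => (k + 1) * log (x + 1) ^ k / (x + 1) :=
    (IsEquivalent.refl.mul (isEquivalent_log_add_one.symm.pow k)).div IsEquivalent.refl
  have hupper : (fun x : ℝ => (k + 1) * log (x + 1) ^ k / x) ~[atTop]
      fun x => (k + 1) * log (x + 1) ^ k / (x + 1) :=
    IsEquivalent.refl.div
      (IsEquivalent.refl.add_const_of_norm_tendsto_atTop tendsto_norm_atTop_atTop).symm
  have hbounds : ∀ᶠ x : ℝ in atTop,
      (k + 1) * log x ^ k / (x + 1) ≤ log (x + 1) ^ (k + 1) - log x ^ (k + 1) ∧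
        log (x + 1) ^ (k + 1) - log x ^ (k + 1) ≤ (k + 1) * log (x + 1) ^ k / x := by
    filter_upwards [eventually_ge_atTop 1] with x hx
    obtain ⟨ξ, ⟨hxξ, hξx⟩, h⟩ :=
      exists_log_add_one_pow_sub_log_pow_eq k (by linarith : 0 < x)
    have := log_nonneg (by linarith : 1 ≤ ξ)
    rw [h]
    constructor <;> gcongr <;> bound
  exact hlower.of_le_of_le hupper (hbounds.mono fun _ => And.left)
    (hbounds.mono fun _ => And.right)

theorem romanHarmonic_eq_sum_range (n k : ℕ) :
    romanHarmonic n k =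
      ∑ i ∈ range n, (-1 : ℝ) ^ i * (n.choose (i + 1)) / ((i : ℝ) + 1) ^ k := by
  rw [romanHarmonic, ← Ico_add_one_right_eq_Icc, sum_Ico_eq_sum_range]
  simp [add_comm]

theorem romanHarmonic_zero_right {n : ℕ} (hn : n ≠ 0) : romanHarmonic n 0 = 1 := by
  have h := Int.alternating_sum_range_choose_of_ne hn
  rw [sum_range_succ'] at h
  simp only [pow_succ, mul_neg_one, neg_mul, sum_neg_distrib, pow_zero, Nat.choose_zero_right,
    Nat.cast_one, mul_one] at h
  rw [romanHarmonic_eq_sum_range]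
  simp only [pow_zero, div_one]
  exact_mod_cast (by linarith : ∑ i ∈ range n, (-1 : ℤ) ^ i * (n.choose (i + 1)) = 1)

theorem romanHarmonic_succ_succ (n k : ℕ) :
    romanHarmonic (n + 1) (k + 1) =
      romanHarmonic n (k + 1) + romanHarmonic (n + 1) k / (n + 1) := by
  have hn : romanHarmonic n (k + 1) =
      ∑ i ∈ range (n + 1), (-1 : ℝ) ^ i * (n.choose (i + 1)) / ((i : ℝ) + 1) ^ (k + 1) := by
    simp [sum_range_succ, romanHarmonic_eq_sum_range]
  rw [hn, romanHarmonic_eq_sum_range, romanHarmonic_eq_sum_range, sum_div, ← sum_add_distrib]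
  refine sum_congr rfl fun i _ => ?_
  have hpascal : ((n + 1).choose (i + 1) : ℝ) = n.choose i + n.choose (i + 1) := by
    exact_mod_cast Nat.choose_succ_succ' n i
  have habsorb : ((n : ℝ) + 1) * n.choose i = (n + 1).choose (i + 1) * ((i : ℝ) + 1) := by
    exact_mod_cast Nat.add_one_mul_choose_eq n i
  field_simp
  linear_combination ((i + 1 : ℝ) ^ k * (n + 1)) * hpascal + (i + 1 : ℝ) ^ k * habsorb

theorem romanHarmonic_succ_right (n k : ℕ) :
    romanHarmonic n (k + 1) = ∑ m ∈ range n, romanHarmonic (m + 1) k / ((m : ℝ) + 1) := by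
  induction n with
  | zero => simp [romanHarmonic]
  | succ n ih => rw [romanHarmonic_succ_succ, ih, sum_range_succ]

theorem romanHarmonic_isEquivalent (k : ℕ) :
    (fun n => romanHarmonic n k) ~[atTop] fun n => log n ^ k / k ! := by
  induction k with
  | zero =>
    refine EventuallyEq.isEquivalent ?_
    filter_upwards [eventually_ne_atTop 0] with n hn
    simp [romanHarmonic_zero_right hn]
  | succ k ih =>
    set v : ℕ → ℝ := fun m => (log ((m : ℝ) + 1) ^ (k + 1) - log m ^ (k + 1)) / (k + 1)!
    have hv_nonneg : 0 ≤ v := fun m => by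
      have hmono : log m ≤ log ((m : ℝ) + 1) := by
        rcases m.eq_zero_or_pos with rfl | hm
        · simp
        · exact log_le_log (by positivity) (by linarith)
      exact div_nonneg (sub_nonneg.2 (pow_le_pow_left₀ (log_natCast_nonneg m) hmono _))
        (by positivity)
    have hv_sum (n : ℕ) : ∑ m ∈ range n, v m = log n ^ (k + 1) / (k + 1)! := by
      have htelescope := sum_range_sub (fun m : ℕ => log (m : ℝ) ^ (k + 1)) n
      push_cast at htelescope
      simp only [v, ← sum_div, htelescope]
      simp
    have hv_tendsto : Tendsto (fun n => ∑ m ∈ range n, v m) atTop atTop := by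
      simp only [hv_sum]
      exact ((tendsto_pow_atTop k.succ_ne_zero).comp
        (tendsto_log_atTop.comp tendsto_natCast_atTop_atTop)).atTop_div_const (by positivity)
    have hshift : (fun m : ℕ => romanHarmonic (m + 1) k) ~[atTop]
        fun m => log ((m : ℝ) + 1) ^ k / k ! := by
      simpa only [Function.comp_def, Nat.cast_add_one] using
        ih.comp_tendsto (tendsto_add_atTop_nat 1)
    have hstep : (fun m : ℕ => romanHarmonic (m + 1) k / ((m : ℝ) + 1)) ~[atTop] v := by
      have hdiff := ((log_add_one_pow_sub_log_pow_isEquivalent k).comp_tendsto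
        tendsto_natCast_atTop_atTop).div (IsEquivalent.refl (u := fun _ : ℕ => ((k + 1)! : ℝ)))
      refine (hshift.div IsEquivalent.refl).trans (EventuallyEq.isEquivalent ?_ |>.trans hdiff.symm)
      refine Eventually.of_forall fun m => ?_
      simp only [Pi.div_apply, Function.comp_apply, Nat.factorial_succ]
      push_cast
      field_simp
    simpa only [← romanHarmonic_succ_right, hv_sum] using hstep.sum_range hv_nonneg hv_tendsto

theorem roman_harmonic_asymptotic_general (k : ℕ) :
    Tendsto (fun n : ℕ => romanHarmonic n k / (Real.log n) ^ k) atTop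
      (nhds (1 / (Nat.factorial k : ℝ))) := by
  have h := (romanHarmonic_isEquivalent k).div (IsEquivalent.refl (u := fun n : ℕ => log n ^ k))
  refine h.symm.tendsto_nhds (tendsto_const_nhds.congr' ?_)
  filter_upwards [eventually_gt_atTop 1] with n hn
  have : log n ≠ 0 := (log_pos (by exact_mod_cast hn)).ne'
  simp only [Pi.div_apply]
  field_simp

theorem roman_harmonic_asymptotic (k : ℕ) (hk : 1 ≤ k) :
    Tendsto (fun n : ℕ => romanHarmonic n k / (Real.log n) ^ k) atTop
      (nhds (1 / (Nat.factorial k : ℝ))) :=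
  roman_harmonic_asymptotic_general k
end
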